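/- arXiv:1711.06963 — 5 statements merged into one kernel-verified Lean document; each statement's English description precedes it below -/
import Mathlib

section
/- Let P := {x ∈ ℝⁿ_+ : Ax ≥ b} be a covering polyhedron with exactly two non-trivial constraints (A ∈ ℝ^{2×n} with A_{ij} ≥ 0, b ∈ ℝ²_+, rational data) satisfying A_{ij} ≤ b_i for all i ∈ [2], j ∈ [n]. Then P ⊆ (1/2.5)·P^I, where P^I := conv(P ∩ ℤⁿ); equivalently, for every nonnegative objective c ∈ ℝⁿ_+, min{cᵀx : x ∈ P ∩ ℤⁿ} ≤ 2.5 · min{cᵀx : x ∈ P}. -/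
open scoped Pointwise

/-- The covering polyhedron `P = {x ≥ 0 : Ax ≥ b}` with two non-trivial constraints. -/
def twoRowCoverPoly {n : ℕ} (A : Matrix (Fin 2) (Fin n) ℚ) (b : Fin 2 → ℚ) :
    Set (Fin n → ℝ) :=
  {x | (∀ j, 0 ≤ x j) ∧ ∀ i : Fin 2, ∑ j, (A i j : ℝ) * x j ≥ (b i : ℝ)}

/-!
Put `y = (5/2) x`. The integer hull `Q` is convex and upward closed, so it suffices to find an
integer point `z` of `P` with `supp z ⊆ supp y` and `Az ≤ Ay`: either `z ≤ y` and `y ∈ Q`, or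
`y = θ z + (1 - θ) y'` with `0 < θ < 1` and `y' ≥ 0` of smaller support, and then `Ay' ≥ Ay`
lets induction on the support apply to `y'`.

A row with `b_i = 0` vanishes, so normalise the others to `a, c ∈ [0,1]ⁿ` with
`a ⬝ y, c ⬝ y ≥ 5/2`. Averaging gives `p, q` in the support of `y` with
`c_p / a_p ≤ (c ⬝ y) / (a ⬝ y) ≤ c_q / a_q`, so `(a ⬝ y, c ⬝ y)` lies in the cone spanned by the
columns `p` and `q`, and a case analysis on these two columns gives `k, m ∈ ℕ` such that
`z = k e_p + m e_q` has `1 ≤ a ⬝ z ≤ a ⬝ y` and `1 ≤ c ⬝ z ≤ c ⬝ y`.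
-/

open Matrix Function Set

section Translate

variable {E : Type*} [AddCommGroup E] [Module ℝ E]

theorem Convex.add_smul_mem_of_add_mem {C : Set E} (hC : Convex ℝ C) {v : E}
    (hv : ∀ x ∈ C, x + v ∈ C) {x : E} (hx : x ∈ C) {t : ℝ} (ht : 0 ≤ t) : x + t • v ∈ C := by
  have hnat : ∀ k : ℕ, x + (k : ℝ) • v ∈ C := by
    intro k
    induction k with
    | zero => simpa using hx
    | succ k ih => simpa [add_smul, add_assoc] using hv _ ih
  have hfrac : t - ⌊t⌋₊ ∈ Icc (0 : ℝ) 1 :=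
    ⟨sub_nonneg.2 (Nat.floor_le ht), by linarith [Nat.lt_floor_add_one t]⟩
  have := hC.add_smul_mem (hnat ⌊t⌋₊) (by simpa [add_smul, add_assoc] using hnat (⌊t⌋₊ + 1)) hfrac
  rwa [add_assoc, ← add_smul, add_sub_cancel] at this

theorem add_mem_convexHull_of_add_mem {s : Set E} {v : E} (h : ∀ x ∈ s, x + v ∈ s) {x : E}
    (hx : x ∈ convexHull ℝ s) : x + v ∈ convexHull ℝ s := by
  have : x + v ∈ convexHull ℝ (s + ({v} : Set E)) := by
    rw [convexHull_add, convexHull_singleton]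
    exact add_mem_add hx rfl
  refine convexHull_mono ?_ this
  rintro _ ⟨y, hy, _, rfl, rfl⟩
  exact h y hy

end Translate

theorem Convex.isUpperSet_of_add_single_mem {ι : Type*} [Fintype ι] [DecidableEq ι]
    {C : Set (ι → ℝ)} (hC : Convex ℝ C) (h : ∀ x ∈ C, ∀ j, x + Pi.single j 1 ∈ C) :
    IsUpperSet C := by
  intro x y hxy hx
  have key : ∀ s : Finset ι, x + ∑ j ∈ s, Pi.single j (y j - x j) ∈ C := by
    intro s
    induction s using Finset.induction_on with
    | empty => simpa using hx
    | insert j s hj ih =>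
      have hsingle : Pi.single j (y j - x j) = (y j - x j) • Pi.single j (1 : ℝ) := by
        rw [← Pi.single_smul', smul_eq_mul, mul_one]
      rw [Finset.sum_insert hj, add_left_comm, add_comm, hsingle]
      exact hC.add_smul_mem_of_add_mem (fun z hz => h z hz j) ih (sub_nonneg.2 (hxy j))
  have hy : y = x + ∑ j, Pi.single j (y j - x j) := by
    ext j
    simp [Pi.single_apply]
  exact hy ▸ key Finset.univ

def integerPoints {ι : Type*} (S : Set (ι → ℝ)) : Set (ι → ℝ) :=
  {x ∈ S | ∀ j, ∃ z : ℤ, x j = z}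

theorem mem_integerPoints {ι : Type*} {S : Set (ι → ℝ)} {x : ι → ℝ} :
    x ∈ integerPoints S ↔ x ∈ S ∧ ∀ j, ∃ z : ℤ, x j = z :=
  Iff.rfl

theorem IsUpperSet.convexHull_integerPoints {ι : Type*} [Fintype ι] [DecidableEq ι]
    {S : Set (ι → ℝ)} (hS : IsUpperSet S) : IsUpperSet (convexHull ℝ (integerPoints S)) := by
  have hstep : ∀ x ∈ integerPoints S, ∀ j, x + Pi.single j 1 ∈ integerPoints S := by
    intro x hx j
    rw [mem_integerPoints] at hx ⊢
    refine ⟨hS (le_add_of_nonneg_right (Pi.single_nonneg.2 zero_le_one)) hx.1, fun k => ?_⟩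
    obtain ⟨z, hz⟩ := hx.2 k
    refine ⟨z + if k = j then 1 else 0, ?_⟩
    rw [Pi.add_apply, hz, Pi.single_apply]
    split_ifs <;> simp
  exact (convex_convexHull ℝ _).isUpperSet_of_add_single_mem fun x hx j =>
    add_mem_convexHull_of_add_mem (fun y hy => hstep y hy j) hx

section Peeling

variable {ι : Type*} [Fintype ι]

theorem exists_convexCombination_support_ssubset {y z : ι → ℝ} (hy : 0 ≤ y)
    (hsupp : support z ⊆ support y) (hzy : ¬z ≤ y) :
    ∃ θ ∈ Ioo (0 : ℝ) 1, ∃ y', 0 ≤ y' ∧ support y' ⊂ support y ∧ y = θ • z + (1 - θ) • y' := by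
  classical
  obtain ⟨j₀, hj₀⟩ : ∃ j, y j < z j := by simpa [Pi.le_def] using hzy
  set S := Finset.univ.filter fun j => 0 < z j
  have hj₀S : j₀ ∈ S := by simpa [S] using (hy j₀).trans_lt hj₀
  obtain ⟨p, hpS, hpmin⟩ := S.exists_min_image (fun j => y j / z j) ⟨j₀, hj₀S⟩
  have hzp : 0 < z p := (Finset.mem_filter.1 hpS).2
  have hyp : 0 < y p := (hy p).lt_of_ne (Ne.symm (hsupp hzp.ne'))
  set θ := y p / z p
  have hθ0 : 0 < θ := div_pos hyp hzp
  have hθ1 : θ < 1 := (hpmin j₀ hj₀S).trans_lt ((div_lt_one ((hy j₀).trans_lt hj₀)).2 hj₀)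
  have hθz : ∀ j, θ * z j ≤ y j := by
    intro j
    rcases le_or_gt (z j) 0 with hz | hz
    · exact (mul_nonpos_of_nonneg_of_nonpos hθ0.le hz).trans (hy j)
    · have := hpmin j (by simp [S, hz])
      rwa [le_div_iff₀ hz] at this
  have hθp : y p - θ * z p = 0 := by simp [θ, div_mul_cancel₀ _ hzp.ne']
  refine ⟨θ, ⟨hθ0, hθ1⟩, (1 - θ)⁻¹ • (y - θ • z), fun j => ?_, ⟨fun j hj => ?_, fun h => ?_⟩, ?_⟩
  · simpa using mul_nonneg (inv_nonneg.2 (sub_nonneg.2 hθ1.le)) (sub_nonneg.2 (hθz j))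
  · by_contra hyj
    have hzj : z j = 0 := notMem_support.1 fun h => hyj (hsupp h)
    simp_all
  · simpa [hθp] using h (show p ∈ support y from hyp.ne')
  · ext j
    have : (1 - θ) ≠ 0 := by linarith
    simp only [Pi.add_apply, Pi.smul_apply, Pi.sub_apply, smul_eq_mul]
    field_simp
    ring

theorem mem_of_forall_exists_support_subset {κ : Type*} {T : Set (ι → ℝ)} (hT : Convex ℝ T)
    (hup : IsUpperSet T) (M : Matrix κ ι ℝ) (t : κ → ℝ)
    (hstep : ∀ y, 0 ≤ y → t ≤ M *ᵥ y → ∃ z ∈ T, support z ⊆ support y ∧ M *ᵥ z ≤ M *ᵥ y)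
    {y : ι → ℝ} (hy0 : 0 ≤ y) (hy : t ≤ M *ᵥ y) : y ∈ T := by
  induction hn : (support y).ncard using Nat.strong_induction_on generalizing y with
  | _ n ih =>
  obtain ⟨z, hzT, hsupp, hMz⟩ := hstep y hy0 hy
  by_cases hzy : z ≤ y
  · exact hup hzy hzT
  obtain ⟨θ, ⟨hθ0, hθ1⟩, y', hy'0, hy'supp, rfl⟩ :=
    exists_convexCombination_support_ssubset hy0 hsupp hzy
  have hMy : M *ᵥ (θ • z + (1 - θ) • y') ≤ M *ᵥ y' := by
    intro k
    have := hMz k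
    simp only [mulVec_add, mulVec_smul, Pi.add_apply, Pi.smul_apply, smul_eq_mul] at this ⊢
    nlinarith
  exact hT hzT (ih _ (hn ▸ ncard_lt_ncard hy'supp) hy'0 (hy.trans hMy) rfl) hθ0.le
    (by linarith) (by ring)

end Peeling

theorem exists_nat_mul_mem_Ico {α s : ℝ} (hα : 0 < α) (hs : 0 ≤ s) :
    ∃ k : ℕ, k * α ∈ Ico s (s + α) := by
  refine ⟨⌈s / α⌉₊, (div_le_iff₀ hα).1 (Nat.le_ceil _), ?_⟩
  have := mul_lt_mul_of_pos_right (Nat.ceil_lt_add_one (div_nonneg hs hα.le)) hα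
  rwa [add_mul, div_mul_cancel₀ _ hα.ne', one_mul] at this

section TwoItems

variable {α β γ δ A C : ℝ}

/-- Some `k` copies of an item with row values `(α, γ)` and `m` copies of one with row values
`(β, δ)` reach `1` in both rows without exceeding `(A, C)`. -/
def ExistsNatCover (α β γ δ A C : ℝ) : Prop :=
  ∃ k m : ℕ, 1 ≤ k * α + m * β ∧ k * α + m * β ≤ A ∧ 1 ≤ k * γ + m * δ ∧ k * γ + m * δ ≤ C

theorem ExistsNatCover.of_swap (h : ExistsNatCover δ γ β α C A) : ExistsNatCover α β γ δ A C := by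
  obtain ⟨k, m, h₁, h₂, h₃, h₄⟩ := h
  exact ⟨m, k, by linarith, by linarith, by linarith, by linarith⟩

theorem ExistsNatCover.of_copies_right (hA : 0 ≤ A) (hC : 2 ≤ C) (hq : β * C ≤ δ * A)
    {m : ℕ} (hm₁ : 1 ≤ m * δ) (hm₂ : m * δ ≤ 2) (hmβ : 1 ≤ m * β) :
    ExistsNatCover α β γ δ A C := by
  refine ⟨0, m, by simpa using hmβ, ?_, by simpa using hm₁, by simpa using hm₂.trans hC⟩
  have : m * β * C ≤ A * C := by nlinarith [Nat.cast_nonneg (α := ℝ) m]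
  simpa using le_of_mul_le_mul_right this (by linarith)

theorem ExistsNatCover.of_copies_right_add_left (hα₀ : 0 < α) (hα₁ : α ≤ 1) (hβ : 0 ≤ β)
    (hγ : 0 ≤ γ) (hδ : 0 < δ) (hA : 2 ≤ A) {m : ℕ} (hm₁ : 1 ≤ m * δ) (hm₂ : m * δ < 1 + δ)
    (hmβ : m * β < 1) (hC : γ + δ + γ / α * (1 - β / δ) ≤ C - 1) :
    ExistsNatCover α β γ δ A C := by
  obtain ⟨k, hk₁, hk₂⟩ := exists_nat_mul_mem_Ico hα₀ (sub_nonneg.2 hmβ.le)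
  have hkγ : k * γ = γ / α * (k * α) := by field_simp
  have ht : β / δ ≤ m * β := by
    have := mul_le_mul_of_nonneg_left hm₁ (div_nonneg hβ hδ.le)
    rwa [mul_one, show β / δ * (m * δ) = m * β by field_simp] at this
  have hr : γ / α * (k * α) ≤ γ / α * (1 - β / δ) + γ := by
    have := mul_le_mul_of_nonneg_left (by linarith : k * α ≤ 1 - β / δ + α)
      (div_nonneg hγ hα₀.le)
    rwa [mul_add, div_mul_cancel₀ _ hα₀.ne'] at this
  have hkγ₀ : 0 ≤ k * γ := mul_nonneg k.cast_nonneg hγ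
  exact ⟨k, m, by linarith, by linarith, by linarith, by linarith⟩

theorem ExistsNatCover.of_half_lt_div_mul_one_sub_div (hα₀ : 0 < α) (hα₁ : α ≤ 1) (hβ : 0 ≤ β)
    (hγ : 0 ≤ γ) (hδ₀ : 0 < δ) (hδ₁ : δ ≤ 1) (hβδ : β < δ) (hA : 2 ≤ A) (hC : 5 / 2 ≤ C)
    (hCγδ : C - 1 < γ + δ + γ / α * (1 - β / δ)) (ht : 1 / 2 < β / δ * (1 - γ / α)) :
    ExistsNatCover α β γ δ A C := by
  set r := γ / α
  set t := β / δ
  have hγr : γ = r * α := (div_mul_cancel₀ _ hα₀.ne').symm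
  have hβt : β = t * δ := (div_mul_cancel₀ _ hδ₀.ne').symm
  have hr0 : 0 ≤ r := div_nonneg hγ hα₀.le
  have ht0 : 0 ≤ t := div_nonneg hβ hδ₀.le
  have ht1 : t < 1 := (div_lt_one hδ₀).2 hβδ
  have hr_half : r < 1 / 2 := by nlinarith
  have ht_half : 1 / 2 < t := by nlinarith
  have hrt : r * (1 - t) < 1 / 4 := by nlinarith
  have hγ_half : γ < 1 / 2 := by nlinarith
  have hδ : 3 / 4 < δ := by linarith
  have hβ38 : 3 / 8 < β := by nlinarith
  by_cases hβ_half : 1 / 2 ≤ β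
  · exact ⟨0, 2, by push_cast; linarith, by push_cast; linarith, by push_cast; linarith,
      by push_cast; linarith⟩
  by_cases hαβ : 1 ≤ α + β
  · exact ⟨1, 1, by push_cast; linarith, by push_cast; linarith, by push_cast; linarith,
      by push_cast; linarith⟩
  push Not at hβ_half hαβ
  obtain ⟨k, hk₁, hk₂⟩ := exists_nat_mul_mem_Ico hα₀ (by linarith : (0 : ℝ) ≤ 1 - 2 * β)
  have hkγ : k * γ ≤ 1 / 2 * (2 - 3 * β) := by
    rw [hγr, ← mul_assoc, mul_comm (k : ℝ) r, mul_assoc]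
    exact mul_le_mul hr_half.le (by linarith) (by positivity) (by norm_num)
  have hkγ₀ : 0 ≤ k * γ := mul_nonneg k.cast_nonneg hγ
  exact ⟨k, 2, by push_cast; linarith, by push_cast; linarith, by push_cast; linarith,
    by push_cast; linarith⟩

theorem existsNatCover (hα₀ : 0 < α) (hα₁ : α ≤ 1) (hβ₀ : 0 ≤ β) (hγ₀ : 0 ≤ γ)
    (hδ₀ : 0 < δ) (hδ₁ : δ ≤ 1) (hA : 5 / 2 ≤ A) (hC : 5 / 2 ≤ C)
    (hp : γ * A ≤ α * C) (hq : β * C ≤ δ * A) : ExistsNatCover α β γ δ A C := by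
  obtain ⟨m, hm₁, hm₂⟩ := exists_nat_mul_mem_Ico hδ₀ zero_le_one
  obtain ⟨k, hk₁, hk₂⟩ := exists_nat_mul_mem_Ico hα₀ zero_le_one
  by_cases hmβ : 1 ≤ m * β
  · exact .of_copies_right (by linarith) (by linarith) hq hm₁ (by linarith) hmβ
  by_cases hkγ : 1 ≤ k * γ
  · exact .of_swap (.of_copies_right (by linarith) (by linarith) hp hk₁ (by linarith) hkγ)
  push Not at hmβ hkγ
  have hβδ : β < δ := lt_of_mul_lt_mul_left (hmβ.trans_le hm₁) (Nat.cast_nonneg m)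
  have hγα : γ < α := lt_of_mul_lt_mul_left (hkγ.trans_le hk₁) (Nat.cast_nonneg k)
  by_cases hCc : γ + δ + γ / α * (1 - β / δ) ≤ C - 1
  · exact .of_copies_right_add_left hα₀ hα₁ hβ₀ hγ₀ hδ₀ (by linarith) hm₁ hm₂ hmβ hCc
  by_cases hAc : β + α + β / δ * (1 - γ / α) ≤ A - 1
  · exact .of_swap (.of_copies_right_add_left hδ₀ hδ₁ hγ₀ hβ₀ hα₀ (by linarith) hk₁ hk₂ hkγ hAc)
  push Not at hCc hAc
  by_cases ht : 1 / 2 < β / δ * (1 - γ / α)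
  · exact .of_half_lt_div_mul_one_sub_div hα₀ hα₁ hβ₀ hγ₀ hδ₀ hδ₁ hβδ (by linarith) hC hCc ht
  by_cases hr : 1 / 2 < γ / α * (1 - β / δ)
  · exact .of_swap
      (.of_half_lt_div_mul_one_sub_div hδ₀ hδ₁ hγ₀ hβ₀ hα₀ hα₁ hγα (by linarith) hA hAc hr)
  push Not at ht hr
  exact ⟨1, 1, by push_cast; linarith, by push_cast; linarith, by push_cast; linarith,
    by push_cast; linarith⟩

end TwoItems

section Selection

variable {ι : Type*} [Fintype ι]

theorem exists_mul_dotProduct_le (a c y : ι → ℝ) (ha : 0 ≤ a) (hc : 0 ≤ c) (hy : 0 ≤ y)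
    (hay : 0 < a ⬝ᵥ y) : ∃ p, y p ≠ 0 ∧ 0 < a p ∧ c p * (a ⬝ᵥ y) ≤ a p * (c ⬝ᵥ y) := by
  classical
  set s := Finset.univ.filter fun j => 0 < a j * y j
  have hs : s.Nonempty := by
    by_contra h
    rw [Finset.not_nonempty_iff_eq_empty, Finset.filter_eq_empty_iff] at h
    exact hay.not_ge (Finset.sum_nonpos fun j _ => not_lt.1 (h (Finset.mem_univ j)))
  have hsum : ∑ j ∈ s, c j * y j * (a ⬝ᵥ y) ≤ ∑ j ∈ s, a j * y j * (c ⬝ᵥ y) := calc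
    _ ≤ ∑ j, c j * y j * (a ⬝ᵥ y) :=
        Finset.sum_le_sum_of_subset_of_nonneg (Finset.subset_univ _)
          fun j _ _ => mul_nonneg (mul_nonneg (hc j) (hy j)) hay.le
    _ = ∑ j, a j * y j * (c ⬝ᵥ y) := by
        rw [← Finset.sum_mul, ← Finset.sum_mul, mul_comm]; rfl
    _ = _ := (Finset.sum_filter_of_ne fun j _ hj =>
        ((mul_nonneg (ha j) (hy j)).lt_of_ne (left_ne_zero_of_mul hj).symm)).symm
  obtain ⟨p, hp, hle⟩ := Finset.exists_le_of_sum_le hs hsum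
  have hpos : 0 < a p * y p := (Finset.mem_filter.1 hp).2
  have hyp : 0 < y p := pos_of_mul_pos_right hpos (ha p)
  refine ⟨p, hyp.ne', pos_of_mul_pos_left hpos (hy p), ?_⟩
  rw [mul_right_comm, mul_right_comm (a p)] at hle
  exact le_of_mul_le_mul_right hle hyp

theorem exists_nat_one_le_dotProduct_le [DecidableEq ι] (a c y : ι → ℝ) (ha₀ : 0 ≤ a)
    (ha₁ : a ≤ 1) (hc₀ : 0 ≤ c) (hc₁ : c ≤ 1) (hy : 0 ≤ y) (hay : 5 / 2 ≤ a ⬝ᵥ y)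
    (hcy : 5 / 2 ≤ c ⬝ᵥ y) :
    ∃ z : ι → ℝ, (∀ j, ∃ k : ℕ, z j = k) ∧ support z ⊆ support y ∧
      1 ≤ a ⬝ᵥ z ∧ a ⬝ᵥ z ≤ a ⬝ᵥ y ∧ 1 ≤ c ⬝ᵥ z ∧ c ⬝ᵥ z ≤ c ⬝ᵥ y := by
  obtain ⟨p, hyp, hap, hp⟩ := exists_mul_dotProduct_le a c y ha₀ hc₀ hy (by linarith)
  obtain ⟨q, hyq, hcq, hq⟩ := exists_mul_dotProduct_le c a y hc₀ ha₀ hy (by linarith)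
  obtain ⟨k, m, h₁, h₂, h₃, h₄⟩ :=
    existsNatCover hap (ha₁ p) (ha₀ q) (hc₀ p) hcq (hc₁ q) hay hcy hp hq
  have hdot : ∀ v : ι → ℝ,
      v ⬝ᵥ (Pi.single p (k : ℝ) + Pi.single q (m : ℝ)) = k * v p + m * v q := by
    intro v
    rw [dotProduct_add, dotProduct_single, dotProduct_single, mul_comm, mul_comm (v q)]
  refine ⟨Pi.single p (k : ℝ) + Pi.single q (m : ℝ), fun j => ?_, ?_, ?_⟩
  · refine ⟨(Pi.single p k + Pi.single q m : ι → ℕ) j, ?_⟩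
    simp only [Pi.add_apply, Pi.single_apply]
    split_ifs <;> simp
  · refine (support_add _ _).trans (union_subset ?_ ?_) <;>
      refine Pi.support_single_subset.trans (singleton_subset_iff.2 ?_) <;> assumption
  · rw [hdot, hdot]
    exact ⟨h₁, h₂, h₃, h₄⟩

end Selection

theorem mulVec_apply_eq_mul_dotProduct_inv_smul {κ ι : Type*} [Fintype ι] {M : Matrix κ ι ℝ}
    {β : κ → ℝ} (hM : ∀ i j, 0 ≤ M i j) (hMβ : ∀ i j, M i j ≤ β i) (i : κ) (v : ι → ℝ) :
    (M *ᵥ v) i = β i * ((β i)⁻¹ • M i) ⬝ᵥ v := by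
  rcases eq_or_ne (β i) 0 with h | h
  · have : M i = 0 := funext fun j => le_antisymm ((hMβ i j).trans_eq h) (hM i j)
    simp [mulVec, this, h]
  · rw [smul_dotProduct, smul_eq_mul, mul_inv_cancel_left₀ h]
    rfl

theorem exists_nat_le_mulVec_le {ι : Type*} [Fintype ι] [DecidableEq ι]
    {M : Matrix (Fin 2) ι ℝ} {β : Fin 2 → ℝ} (hM : ∀ i j, 0 ≤ M i j) (hβ : 0 ≤ β)
    (hMβ : ∀ i j, M i j ≤ β i) {y : ι → ℝ} (hy : 0 ≤ y) (hMy : (5 / 2 : ℝ) • β ≤ M *ᵥ y) :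
    ∃ z : ι → ℝ, (∀ j, ∃ k : ℕ, z j = k) ∧ support z ⊆ support y ∧
      β ≤ M *ᵥ z ∧ M *ᵥ z ≤ M *ᵥ y := by
  set ρ : Fin 2 → ι → ℝ := fun i => (β i)⁻¹ • M i
  have hrow : ∀ i, 0 < β i → 0 ≤ ρ i ∧ ρ i ≤ 1 ∧ 5 / 2 ≤ ρ i ⬝ᵥ y := by
    intro i hi
    refine ⟨fun j => mul_nonneg (inv_nonneg.2 hi.le) (hM i j),
      fun j => inv_mul_le_one_of_le₀ (hMβ i j) hi.le, ?_⟩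
    have := hMy i
    rw [mulVec_apply_eq_mul_dotProduct_inv_smul hM hMβ, Pi.smul_apply, smul_eq_mul,
      mul_comm] at this
    exact le_of_mul_le_mul_left this hi
  suffices ∃ z : ι → ℝ, (∀ j, ∃ k : ℕ, z j = k) ∧ support z ⊆ support y ∧
      ∀ i, β i = 0 ∨ (1 ≤ ρ i ⬝ᵥ z ∧ ρ i ⬝ᵥ z ≤ ρ i ⬝ᵥ y) by
    obtain ⟨z, hz, hsupp, hcov⟩ := this
    refine ⟨z, hz, hsupp, fun i => ?_, fun i => ?_⟩ <;>
      simp only [mulVec_apply_eq_mul_dotProduct_inv_smul hM hMβ] <;>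
      rcases hcov i with h | h
    · simp [h]
    · exact le_mul_of_one_le_right (hβ i) h.1
    · simp [h]
    · exact mul_le_mul_of_nonneg_left h.2 (hβ i)
  rcases (hβ 0).eq_or_lt with h₀ | h₀ <;> rcases (hβ 1).eq_or_lt with h₁ | h₁
  · exact ⟨0, fun _ => ⟨0, by simp⟩, by simp, Fin.forall_fin_two.2 ⟨.inl h₀.symm, .inl h₁.symm⟩⟩
  · obtain ⟨ha₀, ha₁, hay⟩ := hrow 1 h₁
    obtain ⟨z, hz, hsupp, hz₁, hz₂, -⟩ :=
      exists_nat_one_le_dotProduct_le _ _ y ha₀ ha₁ ha₀ ha₁ hy hay hay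
    exact ⟨z, hz, hsupp, Fin.forall_fin_two.2 ⟨.inl h₀.symm, .inr ⟨hz₁, hz₂⟩⟩⟩
  · obtain ⟨ha₀, ha₁, hay⟩ := hrow 0 h₀
    obtain ⟨z, hz, hsupp, hz₁, hz₂, -⟩ :=
      exists_nat_one_le_dotProduct_le _ _ y ha₀ ha₁ ha₀ ha₁ hy hay hay
    exact ⟨z, hz, hsupp, Fin.forall_fin_two.2 ⟨.inr ⟨hz₁, hz₂⟩, .inl h₁.symm⟩⟩
  · obtain ⟨ha₀, ha₁, hay⟩ := hrow 0 h₀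
    obtain ⟨hc₀, hc₁, hcy⟩ := hrow 1 h₁
    obtain ⟨z, hz, hsupp, h⟩ := exists_nat_one_le_dotProduct_le _ _ y ha₀ ha₁ hc₀ hc₁ hy hay hcy
    exact ⟨z, hz, hsupp, Fin.forall_fin_two.2 ⟨.inr ⟨h.1, h.2.1⟩, .inr h.2.2⟩⟩

theorem mem_twoRowCoverPoly {n : ℕ} {A : Matrix (Fin 2) (Fin n) ℚ} {b : Fin 2 → ℚ}
    {x : Fin n → ℝ} :
    x ∈ twoRowCoverPoly A b ↔ 0 ≤ x ∧ (fun i => (b i : ℝ)) ≤ A.map (↑) *ᵥ x :=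
  Iff.rfl

theorem isUpperSet_twoRowCoverPoly {n : ℕ} {A : Matrix (Fin 2) (Fin n) ℚ} {b : Fin 2 → ℚ}
    (hA : ∀ i j, 0 ≤ A i j) : IsUpperSet (twoRowCoverPoly A b) := fun x y hxy hx =>
  ⟨fun j => (hx.1 j).trans (hxy j), fun i => (hx.2 i).le.trans <|
    Finset.sum_le_sum fun j _ => mul_le_mul_of_nonneg_left (hxy j) (by exact_mod_cast hA i j)⟩

theorem five_halves_smul_mem_convexHull_integerPoints {n : ℕ} {A : Matrix (Fin 2) (Fin n) ℚ}
    {b : Fin 2 → ℚ} (hA : ∀ i j, 0 ≤ A i j) (hb : ∀ i, 0 ≤ b i) (hAb : ∀ i j, A i j ≤ b i)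
    {x : Fin n → ℝ} (hx : x ∈ twoRowCoverPoly A b) :
    (5 / 2 : ℝ) • x ∈ convexHull ℝ (integerPoints (twoRowCoverPoly A b)) := by
  rw [mem_twoRowCoverPoly] at hx
  have hM : ∀ i j, 0 ≤ A.map ((↑) : ℚ → ℝ) i j := fun i j => by simpa using hA i j
  have hβ : 0 ≤ fun i => (b i : ℝ) := fun i => by simpa using hb i
  have hMβ : ∀ i j, A.map ((↑) : ℚ → ℝ) i j ≤ b i := fun i j => by simpa using hAb i j
  refine mem_of_forall_exists_support_subset (convex_convexHull ℝ _)
    (isUpperSet_twoRowCoverPoly hA).convexHull_integerPoints (A.map (↑))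
    ((5 / 2 : ℝ) • fun i => (b i : ℝ)) (fun y hy hAy => ?_) (smul_nonneg (by norm_num) hx.1) ?_
  · obtain ⟨z, hz, hsupp, hbz, hzy⟩ := exists_nat_le_mulVec_le hM hβ hMβ hy hAy
    refine ⟨z, subset_convexHull ℝ _ ⟨⟨fun j => ?_, hbz⟩, fun j => ?_⟩, hsupp, hzy⟩ <;>
      obtain ⟨k, hk⟩ := hz j
    · exact hk ▸ Nat.cast_nonneg k
    · exact ⟨k, by simp [hk]⟩
  · rw [mulVec_smul]
    exact smul_le_smul_of_nonneg_left hx.2 (by norm_num)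

theorem twoRowCovering_subset_smul_integerHull_general {n : ℕ}
    (A : Matrix (Fin 2) (Fin n) ℚ) (b : Fin 2 → ℚ)
    (hA : ∀ i j, 0 ≤ A i j) (hb : ∀ i, 0 ≤ b i) (hAb : ∀ i j, A i j ≤ b i) :
    twoRowCoverPoly A b ⊆
      (1 / 2.5 : ℝ) • convexHull ℝ {x ∈ twoRowCoverPoly A b | ∀ j, ∃ z : ℤ, x j = (z : ℝ)} := by
  intro x hx
  refine ⟨(5 / 2 : ℝ) • x, five_halves_smul_mem_convexHull_integerPoints hA hb hAb hx, ?_⟩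
  show (1 / 2.5 : ℝ) • (5 / 2 : ℝ) • x = x
  rw [smul_smul]
  norm_num

/-- A covering polyhedron with exactly two non-trivial constraints and
rational data (`0 ≤ A_{ij}`, `0 ≤ b_i`, `A_{ij} ≤ b_i`) satisfies `P ⊆ (1/2.5) · P^I`, where
`P^I = conv(P ∩ ℤⁿ)`. -/
theorem twoRowCovering_subset_smul_integerHull {n : ℕ} (hn : 0 < n)
    (A : Matrix (Fin 2) (Fin n) ℚ) (b : Fin 2 → ℚ)
    (hA : ∀ i j, 0 ≤ A i j) (hb : ∀ i, 0 ≤ b i) (hAb : ∀ i j, A i j ≤ b i) :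
    twoRowCoverPoly A b ⊆
      (1 / 2.5 : ℝ) • convexHull ℝ {x ∈ twoRowCoverPoly A b | ∀ j, ∃ z : ℤ, x j = (z : ℝ)} :=
  twoRowCovering_subset_smul_integerHull_general A b hA hb hAb
end

section
/- Let M ≥ 2 be an integer and let T := {(x₁,x₂) ∈ ℤ² : x₁ ≥ 0, x₂ ≥ 0, x₁ − M(M−1)x₂ ≤ 1, x₁ ≤ M+1}. Then the maximum of x₁ − (M−1)x₂ over T equals 2, attained at (M+1, 1). -/
/-! For `x₂ = 0` the cut `x₁ − M(M−1)x₂ ≤ 1` gives `x₁ ≤ 1`; for `x₂ ≥ 1` the cap `x₁ ≤ M + 1`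
and `(M − 1)x₂ ≥ M − 1` give `x₁ − (M−1)x₂ ≤ 2`. The point `(M+1, 1)` is feasible once
`M(M−1) ≥ M`, i.e. `M ≥ 2`. -/

lemma objective_le_two {M x₁ x₂ : ℤ} (hM : 1 ≤ M) (hx₂ : 0 ≤ x₂)
    (hcut : x₁ - M * (M - 1) * x₂ ≤ 1) (hcap : x₁ ≤ M + 1) :
    x₁ - (M - 1) * x₂ ≤ 2 := by
  rcases hx₂.eq_or_lt with rfl | hpos
  · simp only [mul_zero, sub_zero] at hcut ⊢
    omega
  · nlinarith [mul_nonneg (sub_nonneg.2 hM) (sub_nonneg.2 (Int.add_one_le_iff.2 hpos))]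

/-- For an integer `M ≥ 2`, the maximum of `x₁ − (M−1)x₂` over the integer
points of `{x ∈ ℝ²_+ : x₁ − M(M−1)x₂ ≤ 1, x₁ ≤ M+1}` equals `2`, attained at `(M+1, 1)`. -/
theorem signPattern_example_ip_value (M : ℤ) (hM : 2 ≤ M) :
    IsGreatest {v : ℤ | ∃ x₁ x₂ : ℤ, 0 ≤ x₁ ∧ 0 ≤ x₂ ∧
        x₁ - M * (M - 1) * x₂ ≤ 1 ∧ x₁ ≤ M + 1 ∧ v = x₁ - (M - 1) * x₂} 2 ∧
      (0 ≤ M + 1 ∧ 0 ≤ (1 : ℤ) ∧ (M + 1) - M * (M - 1) * 1 ≤ 1 ∧ M + 1 ≤ M + 1 ∧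
        (M + 1) - (M - 1) * 1 = 2) := by
  have hvertex_cut : (M + 1) - M * (M - 1) * 1 ≤ 1 := by nlinarith
  have hval : (M + 1) - (M - 1) * 1 = 2 := by ring
  refine ⟨⟨⟨M + 1, 1, by omega, zero_le_one, hvertex_cut, le_rfl, hval.symm⟩, ?_⟩,
    by omega, zero_le_one, hvertex_cut, le_rfl, hval⟩
  rintro v ⟨x₁, x₂, -, hx₂, hcut, hcap, rfl⟩
  exact objective_le_two (by omega) hx₂ hcut hcap
end

section
/- Let M ≥ 2 be an even integer and let T := {(x₁,x₂,x₃,x₄) ∈ ℤ⁴_+ : x₁ − Mx₂ − Mx₃ ≤ 1, x₁ − Mx₂ − Mx₄ ≤ 1, x₁ − Mx₃ − Mx₄ ≤ 1, x₁ ≤ M+1}. Then the maximum of x₁ − (M/2)x₂ − (M/2)x₃ − (M/2)x₄ over T equals 1, attained at (1,0,0,0). -/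
/-! If at least two units are spent on `x₂ + x₃ + x₄`, the objective loses at least
`2 · (M/2) = M` against `x₁ ≤ M + 1`. Otherwise two of `x₂, x₃, x₄` vanish, and the constraint
involving exactly those two reads `x₁ ≤ 1`. -/

namespace SignPattern4

lemma sub_mul_le_one_of_two_le {K x₁ s : ℤ} (hK : 0 ≤ K) (hx₁ : x₁ ≤ 2 * K + 1) (hs : 2 ≤ s) :
    x₁ - K * s ≤ 1 := by
  linarith [mul_le_mul_of_nonneg_left hs hK]

lemma two_eq_zero_of_add_add_le_one {a b c : ℤ} (ha : 0 ≤ a) (hb : 0 ≤ b) (hc : 0 ≤ c)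
    (h : a + b + c ≤ 1) : (a = 0 ∧ b = 0) ∨ (a = 0 ∧ c = 0) ∨ (b = 0 ∧ c = 0) := by
  omega

lemma le_one_of_add_add_le_one {M x₁ x₂ x₃ x₄ : ℤ} (h₂ : 0 ≤ x₂) (h₃ : 0 ≤ x₃) (h₄ : 0 ≤ x₄)
    (c₂₃ : x₁ - M * x₂ - M * x₃ ≤ 1) (c₂₄ : x₁ - M * x₂ - M * x₄ ≤ 1)
    (c₃₄ : x₁ - M * x₃ - M * x₄ ≤ 1) (hs : x₂ + x₃ + x₄ ≤ 1) : x₁ ≤ 1 := by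
  rcases two_eq_zero_of_add_add_le_one h₂ h₃ h₄ hs with ⟨rfl, rfl⟩ | ⟨rfl, rfl⟩ | ⟨rfl, rfl⟩ <;>
    simp_all

lemma objective_le_one {M K x₁ x₂ x₃ x₄ : ℤ} (hK : 0 ≤ K) (hMK : M = 2 * K)
    (h₂ : 0 ≤ x₂) (h₃ : 0 ≤ x₃) (h₄ : 0 ≤ x₄)
    (c₂₃ : x₁ - M * x₂ - M * x₃ ≤ 1) (c₂₄ : x₁ - M * x₂ - M * x₄ ≤ 1)
    (c₃₄ : x₁ - M * x₃ - M * x₄ ≤ 1) (c₁ : x₁ ≤ M + 1) :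
    x₁ - K * x₂ - K * x₃ - K * x₄ ≤ 1 := by
  have hsum : x₁ - K * x₂ - K * x₃ - K * x₄ = x₁ - K * (x₂ + x₃ + x₄) := by ring
  rcases le_or_gt 2 (x₂ + x₃ + x₄) with hs | hs
  · exact hsum ▸ sub_mul_le_one_of_two_le hK (hMK ▸ c₁) hs
  · have hx₁ : x₁ ≤ 1 := le_one_of_add_add_le_one h₂ h₃ h₄ c₂₃ c₂₄ c₃₄ (by omega)
    have hloss : 0 ≤ K * (x₂ + x₃ + x₄) := mul_nonneg hK (by omega)
    linarith

end SignPattern4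

open SignPattern4 in
/-- For an even integer `M = 2K ≥ 2`, the maximum of
`x₁ − (M/2)x₂ − (M/2)x₃ − (M/2)x₄` over the integer points of the sign-pattern polyhedron
`{x ∈ ℝ⁴_+ : x₁ − Mx₂ − Mx₃ ≤ 1, x₁ − Mx₂ − Mx₄ ≤ 1, x₁ − Mx₃ − Mx₄ ≤ 1, x₁ ≤ M+1}`
equals `1`, attained at `(1,0,0,0)`. -/
theorem signPattern4_example_ip_value (M K : ℤ) (hM : 2 ≤ M) (hMK : M = 2 * K) :
    IsGreatest {v : ℤ | ∃ x₁ x₂ x₃ x₄ : ℤ, 0 ≤ x₁ ∧ 0 ≤ x₂ ∧ 0 ≤ x₃ ∧ 0 ≤ x₄ ∧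
        x₁ - M * x₂ - M * x₃ ≤ 1 ∧ x₁ - M * x₂ - M * x₄ ≤ 1 ∧ x₁ - M * x₃ - M * x₄ ≤ 1 ∧
        x₁ ≤ M + 1 ∧ v = x₁ - K * x₂ - K * x₃ - K * x₄} 1 ∧
      ((1 : ℤ) - M * 0 - M * 0 ≤ 1 ∧ (1 : ℤ) - M * 0 - M * 0 ≤ 1 ∧
        (1 : ℤ) - M * 0 - M * 0 ≤ 1 ∧ (1 : ℤ) ≤ M + 1 ∧
        (1 : ℤ) - K * 0 - K * 0 - K * 0 = 1) := by
  have hK : 0 ≤ K := by omega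
  have hfeasible : (1 : ℤ) - M * 0 - M * 0 ≤ 1 ∧ (1 : ℤ) - M * 0 - M * 0 ≤ 1 ∧
      (1 : ℤ) - M * 0 - M * 0 ≤ 1 ∧ (1 : ℤ) ≤ M + 1 ∧ (1 : ℤ) - K * 0 - K * 0 - K * 0 = 1 := by
    simp only [mul_zero, sub_zero, le_refl, true_and, and_true]
    omega
  refine ⟨⟨?_, ?_⟩, hfeasible⟩
  · obtain ⟨c₂₃, c₂₄, c₃₄, c₁, hval⟩ := hfeasible
    exact ⟨1, 0, 0, 0, zero_le_one, le_rfl, le_rfl, le_rfl, c₂₃, c₂₄, c₃₄, c₁, hval.symm⟩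
  · rintro v ⟨x₁, x₂, x₃, x₄, -, h₂, h₃, h₄, c₂₃, c₂₄, c₃₄, c₁, rfl⟩
    exact objective_le_one hK hMK h₂ h₃ h₄ c₂₃ c₂₄ c₃₄ c₁
end

section
/- Let M ≥ 2 be an even integer and let P := {(x₁,x₂,x₃,x₄) ∈ ℝ⁴_+ : x₁ − Mx₂ − Mx₃ ≤ 1, x₁ − Mx₂ − Mx₄ ≤ 1, x₁ − Mx₃ − Mx₄ ≤ 1, x₁ ≤ M+1}. Then the supremum of x₁ − (M/2)x₂ − (M/2)x₃ − (M/2)x₄ over P equals M/4 + 1, attained at the point (M+1, 1/2, 1/2, 1/2). -/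
/-! Summing the four constraints and dividing by 4 gives the valid inequality
`x₁ - (M/2)(x₂ + x₃ + x₄) ≤ M/4 + 1`, and the point `(M+1, 1/2, 1/2, 1/2)` is feasible and
attains it. -/

theorem objective_le_of_constraints {M x₁ x₂ x₃ x₄ : ℝ}
    (h₂₃ : x₁ - M * x₂ - M * x₃ ≤ 1) (h₂₄ : x₁ - M * x₂ - M * x₄ ≤ 1)
    (h₃₄ : x₁ - M * x₃ - M * x₄ ≤ 1) (h₁ : x₁ ≤ M + 1) :
    x₁ - M / 2 * x₂ - M / 2 * x₃ - M / 2 * x₄ ≤ M / 4 + 1 := by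
  linarith

theorem signPattern4_example_lp_value_general (M : ℤ) (hM : 2 ≤ M) :
    IsGreatest {v : ℝ | ∃ x₁ x₂ x₃ x₄ : ℝ, 0 ≤ x₁ ∧ 0 ≤ x₂ ∧ 0 ≤ x₃ ∧ 0 ≤ x₄ ∧
        x₁ - (M : ℝ) * x₂ - (M : ℝ) * x₃ ≤ 1 ∧ x₁ - (M : ℝ) * x₂ - (M : ℝ) * x₄ ≤ 1 ∧
        x₁ - (M : ℝ) * x₃ - (M : ℝ) * x₄ ≤ 1 ∧ x₁ ≤ (M : ℝ) + 1 ∧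
        v = x₁ - ((M : ℝ) / 2) * x₂ - ((M : ℝ) / 2) * x₃ - ((M : ℝ) / 2) * x₄}
      ((M : ℝ) / 4 + 1) ∧
      (((M : ℝ) + 1) - (M : ℝ) * (1 / 2) - (M : ℝ) * (1 / 2) ≤ 1 ∧
        (M : ℝ) + 1 ≤ (M : ℝ) + 1 ∧
        ((M : ℝ) + 1) - ((M : ℝ) / 2) * (1 / 2) - ((M : ℝ) / 2) * (1 / 2) -
          ((M : ℝ) / 2) * (1 / 2) = (M : ℝ) / 4 + 1) := by
  have hM' : (2 : ℝ) ≤ M := by exact_mod_cast hM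
  have h_tight : ((M : ℝ) + 1) - M * (1 / 2) - M * (1 / 2) ≤ 1 := by linarith
  have h_value : ((M : ℝ) + 1) - M / 2 * (1 / 2) - M / 2 * (1 / 2) - M / 2 * (1 / 2)
      = M / 4 + 1 := by ring
  refine ⟨⟨⟨M + 1, 1 / 2, 1 / 2, 1 / 2, by linarith, by norm_num, by norm_num, by norm_num,
      h_tight, h_tight, h_tight, le_rfl, h_value.symm⟩, ?_⟩, h_tight, le_rfl, h_value⟩
  rintro v ⟨x₁, x₂, x₃, x₄, -, -, -, -, h₂₃, h₂₄, h₃₄, h₁, rfl⟩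
  exact objective_le_of_constraints h₂₃ h₂₄ h₃₄ h₁

/-- For an even integer `M ≥ 2`, the supremum of
`x₁ − (M/2)x₂ − (M/2)x₃ − (M/2)x₄` over the LP relaxation
`{x ∈ ℝ⁴_+ : x₁ − Mx₂ − Mx₃ ≤ 1, x₁ − Mx₂ − Mx₄ ≤ 1, x₁ − Mx₃ − Mx₄ ≤ 1, x₁ ≤ M+1}`
equals `M/4 + 1`, attained at the point `(M+1, 1/2, 1/2, 1/2)`. -/
theorem signPattern4_example_lp_value (M : ℤ) (hM : 2 ≤ M) (hMeven : Even M) :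
    IsGreatest {v : ℝ | ∃ x₁ x₂ x₃ x₄ : ℝ, 0 ≤ x₁ ∧ 0 ≤ x₂ ∧ 0 ≤ x₃ ∧ 0 ≤ x₄ ∧
        x₁ - (M : ℝ) * x₂ - (M : ℝ) * x₃ ≤ 1 ∧ x₁ - (M : ℝ) * x₂ - (M : ℝ) * x₄ ≤ 1 ∧
        x₁ - (M : ℝ) * x₃ - (M : ℝ) * x₄ ≤ 1 ∧ x₁ ≤ (M : ℝ) + 1 ∧
        v = x₁ - ((M : ℝ) / 2) * x₂ - ((M : ℝ) / 2) * x₃ - ((M : ℝ) / 2) * x₄}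
      ((M : ℝ) / 4 + 1) ∧
      (((M : ℝ) + 1) - (M : ℝ) * (1 / 2) - (M : ℝ) * (1 / 2) ≤ 1 ∧
        (M : ℝ) + 1 ≤ (M : ℝ) + 1 ∧
        ((M : ℝ) + 1) - ((M : ℝ) / 2) * (1 / 2) - ((M : ℝ) / 2) * (1 / 2) -
          ((M : ℝ) / 2) * (1 / 2) = (M : ℝ) / 4 + 1) :=
  signPattern4_example_lp_value_general M hM
end

section
/- Let M ≥ 2 be an even integer and let S := {(x₁,x₂,x₃,x₄) ∈ ℤ⁴_+ : 2x₁ − 2Mx₂ − Mx₃ − Mx₄ ≤ 2, 2x₁ − Mx₃ − Mx₄ ≤ M+2}. Then the maximum of x₁ − (M/2)x₂ − (M/2)x₃ − (M/2)x₄ over S equals 1. -/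
/-!
Writing `M = 2K`, halving the first constraint gives `f ≤ 1 + K x₂` and the second gives
`f ≤ 1 + K (1 - x₂)` for the objective `f`. Since `x₂` is an integer, one of `x₂` and `1 - x₂`
is nonpositive, so `f ≤ 1`; the point `(1, 0, 0, 0)` attains it.
-/

theorem Int.le_of_le_add_mul_of_le_add_mul_one_sub {f c k t : ℤ} (hk : 0 ≤ k)
    (h₀ : f ≤ c + k * t) (h₁ : f ≤ c + k * (1 - t)) : f ≤ c := by
  rcases le_or_gt t 0 with ht | ht
  · linarith [mul_nonpos_of_nonneg_of_nonpos hk ht]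
  · linarith [mul_nonpos_of_nonneg_of_nonpos hk (by omega : 1 - t ≤ 0)]

/-- For an even integer `M = 2K ≥ 2`, the maximum of
`x₁ − (M/2)x₂ − (M/2)x₃ − (M/2)x₄` over the nonnegative integer points satisfying the two
aggregated constraints `2x₁ − 2Mx₂ − Mx₃ − Mx₄ ≤ 2` and `2x₁ − Mx₃ − Mx₄ ≤ M+2`
equals `1`. -/
theorem signPattern4_aggregated_ip_value (M K : ℤ) (hM : 2 ≤ M) (hMK : M = 2 * K) :
    IsGreatest {v : ℤ | ∃ x₁ x₂ x₃ x₄ : ℤ, 0 ≤ x₁ ∧ 0 ≤ x₂ ∧ 0 ≤ x₃ ∧ 0 ≤ x₄ ∧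
        2 * x₁ - 2 * M * x₂ - M * x₃ - M * x₄ ≤ 2 ∧
        2 * x₁ - M * x₃ - M * x₄ ≤ M + 2 ∧
        v = x₁ - K * x₂ - K * x₃ - K * x₄} 1 := by
  subst hMK
  have hK : 0 ≤ K := by omega
  refine ⟨⟨1, 0, 0, 0, by norm_num [hK]⟩, ?_⟩
  rintro v ⟨x₁, x₂, x₃, x₄, -, -, -, -, hagg₁, hagg₂, rfl⟩
  apply Int.le_of_le_add_mul_of_le_add_mul_one_sub (k := K) (t := x₂) hK
  · linarith
  · linarith
end
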